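/- arXiv:2007.13571 — 2 statements merged into one kernel-verified Lean document; each statement's English description precedes it below -/
import Mathlib

section
/- Let P_J be uniform on [0, P_max], and define λ₁ = P_max·G_s·L·h_s + σ², λ₂ = P_a·G_f·L·h_f + σ², λ₃ = λ₂ + P_max·G_s·L·h_s, where all parameters are positive. Define P_FA(τ) = Pr(P_J·G_s·L·h_s + σ² > τ) and P_MD(τ) = Pr(P_a·G_f·L·h_f + P_J·G_s·L·h_s + σ² < τ). If λ₁ ≥ λ₂, then the function P_e(τ) = P_FA(τ) + P_MD(τ) attains its minimum over τ ∈ ℝ exactly on the interval [λ₂, λ₁], and this minimum value equals 1 − (P_a·G_f·h_f)/(P_max·G_s·h_s). -/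
open MeasureTheory Set

lemma clampX (P d t : ℝ) (hP : 0 < P) (hd : 0 < d) (hdP : d ≤ P) :
    (P - d ≤ max (P - max t 0) 0 + max (min (t - d) P) 0) ∧
    (max (P - max t 0) 0 + max (min (t - d) P) 0 = P - d ↔ (d ≤ t ∧ t ≤ P)) := by
  constructor
  · rcases le_total t 0 with h1 | h1 <;> rcases le_total t P with h2 | h2 <;>
      rcases le_total (t - d) 0 with h3 | h3 <;> rcases le_total (t - d) P with h4 | h4 <;>
      rw [max_def, max_def, max_def, min_def] <;> split_ifs <;> linarith
  · constructor
    · intro h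
      by_contra hc
      rw [not_and_or, not_le, not_le] at hc
      rcases hc with hc | hc
      · have hA : max (P - max t 0) 0 > P - d := by
          rcases le_total t 0 with h1 | h1
          · rw [max_eq_right h1, sub_zero, max_eq_left hP.le]; linarith
          · rw [max_eq_left h1]
            rcases le_total (P - t) 0 with h2 | h2
            · rw [max_eq_right h2]; linarith
            · rw [max_eq_left h2]; linarith
        have hB : max (min (t - d) P) 0 = 0 := by
          rw [max_eq_right]; exact min_le_of_left_le (by linarith)
        linarith
      · have h0 : (0:ℝ) ≤ t := by linarith
        rw [max_eq_left h0] at h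
        rw [max_eq_right (by linarith : P - t ≤ 0)] at h
        rcases le_total (t - d) P with h4 | h4
        · rw [min_eq_left h4, max_eq_left (by linarith)] at h; linarith
        · rw [min_eq_right h4, max_eq_left hP.le] at h; linarith
    · rintro ⟨h1, h2⟩
      rw [max_eq_left (show (0:ℝ) ≤ t by linarith), min_eq_left (by linarith : t - d ≤ P),
        max_eq_left (by linarith : (0:ℝ) ≤ P - t), max_eq_left (by linarith : (0:ℝ) ≤ t - d)]
      ring

lemma resIoi (P t : ℝ) :
    volume.restrict (Icc (0:ℝ) P) (Ioi t) = ENNReal.ofReal (P - max t 0) := by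
  rw [Measure.restrict_apply measurableSet_Ioi]
  rcases le_or_gt 0 t with h | h
  · have : Ioi t ∩ Icc 0 P = Ioc t P := by
      ext x
      simp only [mem_inter_iff, mem_Ioi, mem_Icc, mem_Ioc]
      exact ⟨fun ⟨a, _, c⟩ => ⟨a, c⟩, fun ⟨a, b⟩ => ⟨a, h.trans a.le, b⟩⟩
    rw [this, Real.volume_Ioc, max_eq_left h]
  · have : Ioi t ∩ Icc 0 P = Icc 0 P :=
      inter_eq_right.mpr fun x hx => lt_of_lt_of_le h hx.1
    rw [this, Real.volume_Icc, max_eq_right h.le, sub_zero]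

lemma resIio (P s : ℝ) :
    volume.restrict (Icc (0:ℝ) P) (Iio s) = ENNReal.ofReal (min s P) := by
  rw [Measure.restrict_apply measurableSet_Iio]
  rcases le_or_gt s P with h | h
  · have : Iio s ∩ Icc 0 P = Ico 0 s := by
      ext x
      simp only [mem_inter_iff, mem_Iio, mem_Icc, mem_Ico]
      exact ⟨fun ⟨a, b, _⟩ => ⟨b, a⟩, fun ⟨a, b⟩ => ⟨b, a, b.le.trans h⟩⟩
    rw [this, Real.volume_Ico, min_eq_left h, sub_zero]
  · have : Iio s ∩ Icc 0 P = Icc 0 P :=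
      inter_eq_right.mpr fun x hx => lt_of_le_of_lt hx.2 h
    rw [this, Real.volume_Icc, min_eq_right h.le, sub_zero]

/-- when `λ₁ ≥ λ₂`, the total detection error rate
`P_e(τ) = P_FA(τ) + P_MD(τ)` attains its minimum exactly on `[λ₂, λ₁]`,
and the minimum value is `1 - P_a G_f h_f / (Pmax G_s h_s)`. -/
theorem stmt_1 (Pa Pmax Gf Gs L hf hs σ2 : ℝ)
    (hPa : 0 < Pa) (hP : 0 < Pmax) (hGf : 0 < Gf) (hGs : 0 < Gs)
    (hL : 0 < L) (hhf : 0 < hf) (hhs : 0 < hs) (hσ : 0 < σ2)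
    (μ : Measure ℝ)
    (hμ : μ = (ENNReal.ofReal Pmax)⁻¹ • (volume.restrict (Icc (0:ℝ) Pmax)))
    (lam1 lam2 : ℝ)
    (hlam1 : lam1 = Pmax * Gs * L * hs + σ2)
    (hlam2 : lam2 = Pa * Gf * L * hf + σ2)
    (hord : lam1 ≥ lam2)
    (PFA PMD Pe : ℝ → ℝ)
    (hPFA : ∀ τ, PFA τ = (μ {x : ℝ | x * Gs * L * hs + σ2 > τ}).toReal)
    (hPMD : ∀ τ, PMD τ = (μ {x : ℝ | Pa * Gf * L * hf + x * Gs * L * hs + σ2 < τ}).toReal)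
    (hPe : ∀ τ, Pe τ = PFA τ + PMD τ) :
    (∀ τ : ℝ, Pe τ ≥ 1 - (Pa * Gf * hf) / (Pmax * Gs * hs)) ∧
    (∀ τ : ℝ, Pe τ = 1 - (Pa * Gf * hf) / (Pmax * Gs * hs) ↔ τ ∈ Icc lam2 lam1) := by
  have hc : (0:ℝ) < Gs * L * hs := by positivity
  set c : ℝ := Gs * L * hs with hcdef
  set a : ℝ := Pa * Gf * L * hf with hadef
  have ha : (0:ℝ) < a := by positivity
  set d : ℝ := a / c with hddef
  have hd : (0:ℝ) < d := div_pos ha hc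
  have hdP : d ≤ Pmax := by
    rw [hddef, div_le_iff₀ hc]
    rw [hlam1, hlam2] at hord
    nlinarith [hord]
  -- P_FA closed form
  have hPFA' : ∀ τ, PFA τ = max (Pmax - max ((τ - σ2) / c) 0) 0 / Pmax := by
    intro τ
    have hset : {x : ℝ | x * Gs * L * hs + σ2 > τ} = Ioi ((τ - σ2) / c) := by
      ext x
      simp only [mem_setOf_eq, mem_Ioi, gt_iff_lt, div_lt_iff₀ hc]
      have hxc : x * Gs * L * hs = x * c := by rw [hcdef]; ring
      constructor <;> intro h <;> linarith [hxc]
    rw [hPFA, hset, hμ, Measure.smul_apply, smul_eq_mul, resIoi, ENNReal.toReal_mul,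
      ENNReal.toReal_inv, ENNReal.toReal_ofReal hP.le, ENNReal.toReal_ofReal', inv_mul_eq_div]
  -- P_MD closed form
  have hPMD' : ∀ τ, PMD τ = max (min ((τ - σ2) / c - d) Pmax) 0 / Pmax := by
    intro τ
    have hset : {x : ℝ | Pa * Gf * L * hf + x * Gs * L * hs + σ2 < τ}
        = Iio ((τ - σ2) / c - d) := by
      ext x
      have hsub : (τ - σ2) / c - d = (τ - σ2 - a) / c := by
        rw [hddef, div_sub_div_same]
      simp only [mem_setOf_eq, mem_Iio, hsub, lt_div_iff₀ hc]
      have hxc : x * Gs * L * hs = x * c := by rw [hcdef]; ring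
      constructor <;> intro h <;> linarith [hxc]
    rw [hPMD, hset, hμ, Measure.smul_apply, smul_eq_mul, resIio, ENNReal.toReal_mul,
      ENNReal.toReal_inv, ENNReal.toReal_ofReal hP.le, ENNReal.toReal_ofReal', inv_mul_eq_div]
  have hbound : (Pa * Gf * hf) / (Pmax * Gs * hs) = d / Pmax := by
    rw [hddef, hadef, hcdef]
    field_simp
  have hPe' : ∀ τ, Pe τ = (max (Pmax - max ((τ - σ2) / c) 0) 0
      + max (min ((τ - σ2) / c - d) Pmax) 0) / Pmax := by
    intro τ
    rw [hPe, hPFA', hPMD', add_div]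
  constructor
  · intro τ
    have key := (clampX Pmax d ((τ - σ2) / c) hP hd hdP).1
    rw [hPe', hbound]
    have heq : 1 - d / Pmax = (Pmax - d) / Pmax := by field_simp
    rw [ge_iff_le, heq]
    gcongr
  · intro τ
    have key := (clampX Pmax d ((τ - σ2) / c) hP hd hdP).2
    have htrans : (d ≤ (τ - σ2) / c ∧ (τ - σ2) / c ≤ Pmax) ↔ τ ∈ Icc lam2 lam1 := by
      rw [mem_Icc, hlam1, hlam2]
      constructor
      · rintro ⟨h1, h2⟩
        rw [hddef, div_le_div_iff_of_pos_right hc] at h1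
        rw [div_le_iff₀ hc] at h2
        constructor <;> nlinarith
      · rintro ⟨h1, h2⟩
        constructor
        · rw [hddef, div_le_div_iff_of_pos_right hc]; nlinarith
        · rw [div_le_iff₀ hc]; nlinarith
    rw [hPe', hbound, ← htrans, ← key]
    rw [div_eq_iff hP.ne', sub_mul, one_mul, div_mul_cancel₀ _ hP.ne']
end

section
/- Let P_J ~ Uniform[0, P_max] and let S = P_J · c + σ² for constants c > 0, σ² > 0. For any threshold τ, define P_FA(τ) = Pr(S > τ) and P_MD(τ) = Pr(S + d < τ) for a constant d > 0 with d ≤ c·P_max. Then for every τ, P_FA(τ) + P_MD(τ) ≥ 1 − d/(c·P_max), with equality attained for all τ ∈ [σ² + d, σ² + c·P_max]. -/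
/-! Both error events are half-lines in the jamming power: a false alarm is `P_J > hi` and a
missed detection is `P_J < lo`, where `hi - lo = d / c`. Hence the total error is
`1 - Pr(P_J ∈ [lo, hi])`, and for the uniform law on `[0, Pmax]` this probability is at most
`(hi - lo) / Pmax`, with equality when `[lo, hi] ⊆ [0, Pmax]`. -/

open MeasureTheory ProbabilityTheory Set

lemma probReal_Ioi_add_probReal_Iio {α : Type*} [LinearOrder α] [TopologicalSpace α]
    [OrderClosedTopology α] [MeasurableSpace α] [OpensMeasurableSpace α]
    (μ : Measure α) [IsProbabilityMeasure μ] {a b : α} (hba : b ≤ a) :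
    μ.real (Ioi a) + μ.real (Iio b) = 1 - μ.real (Icc b a) := by
  have hcompl : (Icc b a)ᶜ = Ioi a ∪ Iio b := by
    ext x
    simp only [mem_compl_iff, mem_Icc, mem_union, mem_Ioi, mem_Iio, not_and_or, not_le]
    exact or_comm
  have hdisj : Disjoint (Ioi a) (Iio b) :=
    Set.disjoint_left.2 fun x hxa hxb => (lt_irrefl x) ((hxb.trans_le hba).trans hxa)
  rw [← probReal_compl_eq_one_sub measurableSet_Icc, hcompl,
    measureReal_union hdisj measurableSet_Iio]

lemma cond_real_apply {Ω : Type*} [MeasurableSpace Ω] (μ : Measure Ω) {s : Set Ω}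
    (hs : MeasurableSet s) (t : Set Ω) : μ[|s].real t = μ.real (s ∩ t) / μ.real s := by
  simp only [measureReal_def, cond_apply hs, ENNReal.toReal_mul, ENNReal.toReal_inv,
    inv_mul_eq_div]

lemma cond_real_le_div {Ω : Type*} [MeasurableSpace Ω] (μ : Measure Ω) {s t : Set Ω}
    (hs : MeasurableSet s) (ht : μ t ≠ ⊤) : μ[|s].real t ≤ μ.real t / μ.real s := by
  rw [cond_real_apply μ hs]
  exact div_le_div_of_nonneg_right (measureReal_mono inter_subset_right ht) measureReal_nonneg

lemma cond_real_of_subset {Ω : Type*} [MeasurableSpace Ω] (μ : Measure Ω) {s t : Set Ω}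
    (hs : MeasurableSet s) (hts : t ⊆ s) : μ[|s].real t = μ.real t / μ.real s := by
  rw [cond_real_apply μ hs, inter_eq_right.2 hts]

section AffineSublevel

variable {K : Type*} [Field K] [LinearOrder K] [IsStrictOrderedRing K] {c : K}

lemma setOf_mul_add_lt (hc : 0 < c) (e τ : K) : {x : K | x * c + e < τ} = Iio ((τ - e) / c) := by
  ext x
  rw [mem_ofPred_eq, mem_Iio, lt_div_iff₀ hc, lt_sub_iff_add_lt]

lemma setOf_lt_mul_add (hc : 0 < c) (e τ : K) : {x : K | τ < x * c + e} = Ioi ((τ - e) / c) := by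
  ext x
  rw [mem_ofPred_eq, mem_Ioi, div_lt_iff₀ hc, sub_lt_iff_lt_add]

end AffineSublevel

theorem stmt_19_general (c σ2 d Pmax : ℝ)
    (hc : 0 < c) (hd : 0 < d) (hP : 0 < Pmax)
    (μ : Measure ℝ)
    (hμ : μ = (ENNReal.ofReal Pmax)⁻¹ • (volume.restrict (Icc (0:ℝ) Pmax)))
    (PFA PMD : ℝ → ℝ)
    (hPFA : ∀ τ, PFA τ = (μ {x : ℝ | x * c + σ2 > τ}).toReal)
    (hPMD : ∀ τ, PMD τ = (μ {x : ℝ | x * c + σ2 + d < τ}).toReal) :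
    (∀ τ : ℝ, PFA τ + PMD τ ≥ 1 - d / (c * Pmax)) ∧
    (∀ τ ∈ Icc (σ2 + d) (σ2 + c * Pmax), PFA τ + PMD τ = 1 - d / (c * Pmax)) := by
  have hμ_cond : μ = volume[|Icc 0 Pmax] := by
    rw [hμ, ProbabilityTheory.cond, Real.volume_Icc, sub_zero]
  have : IsProbabilityMeasure μ :=
    hμ_cond ▸ cond_isProbabilityMeasure_of_finite (by simp [hP]) (by simp)
  let lo (τ : ℝ) : ℝ := (τ - (σ2 + d)) / c
  let hi (τ : ℝ) : ℝ := (τ - σ2) / c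
  have hlo_le_hi (τ : ℝ) : lo τ ≤ hi τ := by simp only [lo, hi]; gcongr; linarith
  have htotal (τ : ℝ) : PFA τ + PMD τ = 1 - μ.real (Icc (lo τ) (hi τ)) := by
    simp only [hPFA, hPMD, ← measureReal_def, gt_iff_lt, add_assoc, setOf_lt_mul_add hc,
      setOf_mul_add_lt hc]
    exact probReal_Ioi_add_probReal_Iio μ (hlo_le_hi τ)
  have hwidth (τ : ℝ) :
      volume.real (Icc (lo τ) (hi τ)) / volume.real (Icc (0 : ℝ) Pmax) = d / (c * Pmax) := by
    rw [Real.volume_real_Icc_of_le (hlo_le_hi τ), Real.volume_real_Icc_of_le hP.le]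
    simp only [lo, hi]
    field_simp [hP.ne']
    ring
  refine ⟨fun τ => ?_, fun τ ⟨hτd, hτP⟩ => ?_⟩
  · rw [htotal, ge_iff_le, ← hwidth τ, hμ_cond]
    gcongr
    exact cond_real_le_div _ measurableSet_Icc (by simp)
  · have hsub : Icc (lo τ) (hi τ) ⊆ Icc 0 Pmax := by
      refine Icc_subset_Icc ?_ ?_
      · exact div_nonneg (by linarith) hc.le
      · rw [div_le_iff₀ hc]; linarith
    rw [htotal, ← hwidth τ, hμ_cond, cond_real_of_subset _ measurableSet_Icc hsub]

/-- abstract Theorem 1: for `P_J ~ Uniform[0, Pmax]` and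
`S = P_J c + σ²`, any threshold test has total error
`P_FA(τ) + P_MD(τ) ≥ 1 - d/(c Pmax)`, with equality for all
`τ ∈ [σ² + d, σ² + c Pmax]`. -/
theorem stmt_19 (c σ2 d Pmax : ℝ)
    (hc : 0 < c) (hσ : 0 < σ2) (hd : 0 < d) (hP : 0 < Pmax)
    (hdc : d ≤ c * Pmax)
    (μ : Measure ℝ)
    (hμ : μ = (ENNReal.ofReal Pmax)⁻¹ • (volume.restrict (Icc (0:ℝ) Pmax)))
    (PFA PMD : ℝ → ℝ)
    (hPFA : ∀ τ, PFA τ = (μ {x : ℝ | x * c + σ2 > τ}).toReal)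
    (hPMD : ∀ τ, PMD τ = (μ {x : ℝ | x * c + σ2 + d < τ}).toReal) :
    (∀ τ : ℝ, PFA τ + PMD τ ≥ 1 - d / (c * Pmax)) ∧
    (∀ τ ∈ Icc (σ2 + d) (σ2 + c * Pmax), PFA τ + PMD τ = 1 - d / (c * Pmax)) :=
  stmt_19_general c σ2 d Pmax hc hd hP μ hμ PFA PMD hPFA hPMD
end
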